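/- Let b ≥ 3 and let a₁,…,a_{d−1} be positive integers coprime to b. Then for every t ∈ ℤ, (1/φ(b))·∑_{1≤m≤b−1, gcd(m,b)=1} S_{(a₁,…,a_{d−1},m;b)}(t) = (1/2)·S_{(a₁,…,a_{d−1};b)}(t), where φ is Euler's totient function. -/
import Mathlib


noncomputable def xi (b : ℕ) : ℂ := Complex.exp (2 * Real.pi * Complex.I / b)

noncomputable def FDS (b : ℕ) {d : ℕ} (a : Fin d → ℕ) (s : Finset (Fin d)) (t : ℤ) : ℂ :=
  (b : ℂ)⁻¹ * ∑ j ∈ Finset.Ico 1 b,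
    xi b ^ ((j : ℤ) * t) / ∏ i ∈ s, (1 - xi b ^ ((j : ℤ) * (a i : ℤ)))

lemma xi_prim (b : ℕ) (hb : b ≠ 0) : IsPrimitiveRoot (xi b) b :=
  Complex.isPrimitiveRoot_exp b hb

lemma xi_ne_zero (b : ℕ) : xi b ≠ 0 := Complex.exp_ne_zero _

lemma xi_zpow_ne_one (b : ℕ) (hb : b ≠ 0) (k : ℤ) (hk : ¬ ((b : ℤ) ∣ k)) :
    xi b ^ k ≠ 1 := fun h => hk (((xi_prim b hb).zpow_eq_one_iff_dvd k).mp h)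

/-- The key pairing identity: sum over coprime residues of `(1 - ξ^{jm})⁻¹` is `φ(b)/2`. -/
lemma key_sum (b : ℕ) (hb : 3 ≤ b) (j : ℕ) (hj1 : 1 ≤ j) (hj2 : j < b) :
    ∑ m ∈ (Finset.Ico 1 b).filter (fun m => Nat.gcd m b = 1),
      (1 - xi b ^ ((j : ℤ) * (m : ℤ)))⁻¹ = (Nat.totient b : ℂ) / 2 := by
  have hb0 : b ≠ 0 := by omega
  set F := (Finset.Ico 1 b).filter (fun m => Nat.gcd m b = 1) with hF
  -- membership facts
  have hmem : ∀ m ∈ F, 1 ≤ m ∧ m < b ∧ Nat.gcd m b = 1 := by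
    intro m hm
    simp only [hF, Finset.mem_filter, Finset.mem_Ico] at hm
    exact ⟨hm.1.1, hm.1.2, hm.2⟩
  have hmap : ∀ m ∈ F, b - m ∈ F := by
    intro m hm
    obtain ⟨h1, h2, h3⟩ := hmem m hm
    simp only [hF, Finset.mem_filter, Finset.mem_Ico]
    refine ⟨⟨by omega, by omega⟩, ?_⟩
    rw [Nat.gcd_self_sub_left (by omega : m ≤ b)]
    exact h3
  -- for m in F, xi^(j*m) ≠ 1
  have hne : ∀ m ∈ F, xi b ^ ((j : ℤ) * (m : ℤ)) ≠ 1 := by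
    intro m hm
    obtain ⟨h1, h2, h3⟩ := hmem m hm
    apply xi_zpow_ne_one b hb0
    intro hdvd
    have : b ∣ j * m := by exact_mod_cast hdvd
    have hbj : b ∣ j := Nat.Coprime.dvd_of_dvd_mul_right (Nat.Coprime.symm h3) this
    have := Nat.le_of_dvd (by omega) hbj
    omega
  -- pairing: f m + f (b - m) = 1
  have hpair : ∀ m ∈ F, (1 - xi b ^ ((j : ℤ) * (m : ℤ)))⁻¹
      + (1 - xi b ^ ((j : ℤ) * ((b - m : ℕ) : ℤ)))⁻¹ = 1 := by
    intro m hm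
    obtain ⟨h1, h2, h3⟩ := hmem m hm
    set x := xi b ^ ((j : ℤ) * (m : ℤ)) with hx
    have hxval : xi b ^ ((j : ℤ) * ((b - m : ℕ) : ℤ)) = x⁻¹ := by
      have hcast : ((b - m : ℕ) : ℤ) = (b : ℤ) - (m : ℤ) := by
        push_cast [Nat.cast_sub (by omega : m ≤ b)]; ring
      rw [hcast, show (j : ℤ) * ((b : ℤ) - (m : ℤ)) =
        (b : ℤ) * (j : ℤ) + (-((j : ℤ) * (m : ℤ))) by ring, zpow_add₀ (xi_ne_zero b),
        zpow_mul, zpow_natCast]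
      have : xi b ^ (b : ℤ) = 1 := by
        rw [zpow_natCast]; exact (xi_prim b hb0).pow_eq_one
      rw [this, one_pow, one_mul, zpow_neg]
    rw [hxval]
    have hx1 : x ≠ 1 := hne m hm
    have hx0 : x ≠ 0 := zpow_ne_zero _ (xi_ne_zero b)
    have h1x : (1 : ℂ) - x ≠ 0 := fun h => hx1 (by linear_combination -h)
    have hsplit : (1:ℂ) - x⁻¹ = (x - 1) * x⁻¹ := by
      rw [sub_mul, mul_inv_cancel₀ hx0, one_mul]
    rw [hsplit, mul_inv, inv_inv, show x - 1 = -(1 - x) from by ring, inv_neg]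
    field_simp
    ring
  -- reindex sum via m ↦ b - m
  have hswap : ∑ m ∈ F, (1 - xi b ^ ((j : ℤ) * (m : ℤ)))⁻¹
      = ∑ m ∈ F, (1 - xi b ^ ((j : ℤ) * ((b - m : ℕ) : ℤ)))⁻¹ := by
    apply Finset.sum_bij' (fun m _ => b - m) (fun m _ => b - m) hmap hmap
    · intro m hm; obtain ⟨h1, h2, _⟩ := hmem m hm; omega
    · intro m hm; obtain ⟨h1, h2, _⟩ := hmem m hm; omega
    · intro m hm
      obtain ⟨h1, h2, _⟩ := hmem m hm
      have hbm : b - (b - m) = m := by omega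
      rw [hbm]
  -- card of F is totient b
  have hcard : F.card = Nat.totient b := by
    rw [Nat.totient_eq_card_coprime]
    congr 1
    ext m
    simp only [hF, Finset.mem_filter, Finset.mem_Ico, Finset.mem_range]
    constructor
    · rintro ⟨⟨h1, h2⟩, h3⟩
      exact ⟨h2, Nat.Coprime.symm h3⟩
    · rintro ⟨h1, h2⟩
      have h3 : Nat.gcd m b = 1 := Nat.Coprime.symm h2
      refine ⟨⟨?_, h1⟩, h3⟩
      rcases Nat.eq_zero_or_pos m with h | h
      · subst h; rw [Nat.gcd_zero_left] at h3; omega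
      · exact h
  -- conclude
  have h2S : (2 : ℂ) * ∑ m ∈ F, (1 - xi b ^ ((j : ℤ) * (m : ℤ)))⁻¹
      = (Nat.totient b : ℂ) := by
    have := Finset.sum_add_distrib (s := F)
      (f := fun m => (1 - xi b ^ ((j : ℤ) * (m : ℤ)))⁻¹)
      (g := fun m => (1 - xi b ^ ((j : ℤ) * ((b - m : ℕ) : ℤ)))⁻¹)
    rw [two_mul]
    nth_rewrite 2 [hswap]
    rw [← this, Finset.sum_congr rfl hpair]
    simp [hcard]
  rw [eq_div_iff (by norm_num : (2:ℂ) ≠ 0)]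
  linear_combination h2S

/-- Averaging a Fourier–Dedekind sum over the last variable halves the dimension‐lowered sum:
`(1/φ(b)) ∑_{(m,b)=1, 1≤m≤b−1} S_{(a₁,…,a_{d−1},m;b)}(t) = (1/2) S_{(a₁,…,a_{d−1};b)}(t)`. -/
theorem stmt9 (d b : ℕ) (hb : 3 ≤ b) (a : Fin d → ℕ)
    (hpos : ∀ i, 0 < a i) (hcop : ∀ i, Nat.Coprime (a i) b) (t : ℤ) :
    ((Nat.totient b : ℂ))⁻¹ *
        ∑ m ∈ (Finset.Ico 1 b).filter (fun m => Nat.gcd m b = 1),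
          FDS b (Fin.snoc a m) Finset.univ t =
      (1 / 2 : ℂ) * FDS b a Finset.univ t := by
  have hb0 : b ≠ 0 := by omega
  have hφ : (Nat.totient b : ℂ) ≠ 0 := by
    exact_mod_cast (Nat.totient_pos.mpr (by omega : 0 < b)).ne'
  set F := (Finset.Ico 1 b).filter (fun m => Nat.gcd m b = 1) with hF
  unfold FDS
  have hinner : ∀ m : ℕ, (b : ℂ)⁻¹ * ∑ j ∈ Finset.Ico 1 b,
      xi b ^ ((j : ℤ) * t) / ∏ i : Fin (d+1), (1 - xi b ^ ((j : ℤ) * (((Fin.snoc a m : Fin (d+1) → ℕ) i : ℕ) : ℤ)))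
      = ∑ j ∈ Finset.Ico 1 b, (b : ℂ)⁻¹ *
        ((xi b ^ ((j : ℤ) * t) / ∏ i : Fin d, (1 - xi b ^ ((j : ℤ) * (a i : ℤ))))
          * (1 - xi b ^ ((j : ℤ) * (m : ℤ)))⁻¹) := by
    intro m
    rw [Finset.mul_sum]
    apply Finset.sum_congr rfl
    intro j _
    congr 1
    rw [Fin.prod_univ_castSucc]
    simp only [Fin.snoc_castSucc, Fin.snoc_last]
    rw [div_eq_mul_inv, div_eq_mul_inv, mul_inv]
    ring
  calc ((Nat.totient b : ℂ))⁻¹ * ∑ m ∈ F, (b : ℂ)⁻¹ * ∑ j ∈ Finset.Ico 1 b,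
        xi b ^ ((j : ℤ) * t) / ∏ i : Fin (d+1), (1 - xi b ^ ((j : ℤ) * (((Fin.snoc a m : Fin (d+1) → ℕ) i : ℕ) : ℤ)))
      = ((Nat.totient b : ℂ))⁻¹ * ∑ j ∈ Finset.Ico 1 b, (b : ℂ)⁻¹ *
          ((xi b ^ ((j : ℤ) * t) / ∏ i : Fin d, (1 - xi b ^ ((j : ℤ) * (a i : ℤ))))
            * ∑ m ∈ F, (1 - xi b ^ ((j : ℤ) * (m : ℤ)))⁻¹) := by
        rw [Finset.sum_congr rfl (fun m _ => hinner m), Finset.sum_comm]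
        congr 1
        apply Finset.sum_congr rfl
        intro j _
        rw [Finset.mul_sum, Finset.mul_sum]
    _ = (1 / 2 : ℂ) * ((b : ℂ)⁻¹ * ∑ j ∈ Finset.Ico 1 b,
          xi b ^ ((j : ℤ) * t) / ∏ i : Fin d, (1 - xi b ^ ((j : ℤ) * (a i : ℤ)))) := by
        rw [Finset.mul_sum, Finset.mul_sum, Finset.mul_sum]
        apply Finset.sum_congr rfl
        intro j hj
        rw [Finset.mem_Ico] at hj
        rw [key_sum b hb j hj.1 hj.2]
        field_simp
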